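/- arXiv:2212.01848 — 2 statements merged into one kernel-verified Lean document; each statement's English description precedes it below -/
import Mathlib

section
/- Let f_1, …, f_P : ℝ^n → ℝ be continuously differentiable and suppose there is L > 0 such that each gradient ∇f_p is L-Lipschitz continuous; set f = ∑_{p=1}^P f_p. Let γ ∈ (0,1), δ ∈ (0,1) and τ > 0. Let {w^k} ⊂ ℝ^n be a bounded sequence and {ζ^k} ⊂ (0,∞) with ζ^k → 0. For each k let (h_1^k, …, h_P^k) be a permutation of {1, …, P}, define w̃_0^k = w^k, w̃_i^k = w̃_{i−1}^k − ζ^k ∇f_{h_i^k}(w̃_{i−1}^k) for i = 1, …, P, and d^k = −∑_{i=1}^P ∇f_{h_i^k}(w̃_{i−1}^k). Suppose there is an infinite set K ⊆ ℕ such that for every k ∈ K at least one of the following holds: (i) ‖d^k‖ ≤ τ ζ^k; (ii) f(w^k + ζ^k d^k) > f(w^k) − γ ζ^k ‖d^k‖²; (iii) there is α^k > 0 with α^k ‖d^k‖² ≤ τ ζ^k and f(w^k + (α^k/δ) d^k) > f(w^k) − γ (α^k/δ) ‖d^k‖². Then {w^k} admits limit points and at least one limit point w̄ of {w^k} satisfies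 ∇f(w̄) = 0. -/
/-!
Within one epoch the inner iterates move only O(ζ^k) away from w^k (a discrete Grönwall
estimate), so by Lipschitz continuity of the component gradients the direction d^k differs from
-∇f(w^k) by O(ζ^k). Through the descent lemma, each failed Armijo test (ii), (iii), and directly
also (i), gives (1 - γ)‖d^k‖² ≤ O(ζ^k) + O(‖d^k + ∇f(w^k)‖). Hence d^k → 0 and ∇f(w^k) → 0
along K, and a cluster point of {w^k}_{k ∈ K}, which exists by boundedness, is stationary by
continuity of ∇f.
-/

open Filter Finset Topology

section GradientSum

variable {E : Type*} [NormedAddCommGroup E] [InnerProductSpace ℝ E] [CompleteSpace E]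
  {ι : Type*} {s : Finset ι} {f : ι → E → ℝ} {x : E}

theorem HasGradientAt.fun_sum {f' : ι → E} (h : ∀ i ∈ s, HasGradientAt (f i) (f' i) x) :
    HasGradientAt (fun y => ∑ i ∈ s, f i y) (∑ i ∈ s, f' i) x := by
  rw [hasGradientAt_iff_hasFDerivAt, map_sum]
  exact HasFDerivAt.fun_sum fun i hi => (h i hi).hasFDerivAt

theorem gradient_fun_sum (h : ∀ i ∈ s, DifferentiableAt ℝ (f i) x) :
    gradient (fun y => ∑ i ∈ s, f i y) x = ∑ i ∈ s, gradient (f i) x :=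
  (HasGradientAt.fun_sum fun i hi => (h i hi).hasGradientAt).gradient

theorem norm_gradient_fun_sum_sub_le {L : ℝ} (hf : ∀ i ∈ s, Differentiable ℝ (f i))
    (hlip : ∀ i ∈ s, ∀ u v, ‖gradient (f i) u - gradient (f i) v‖ ≤ L * ‖u - v‖) (u v : E) :
    ‖gradient (fun y => ∑ i ∈ s, f i y) u - gradient (fun y => ∑ i ∈ s, f i y) v‖ ≤
      #s * L * ‖u - v‖ := by
  rw [gradient_fun_sum fun i hi => (hf i hi) u, gradient_fun_sum fun i hi => (hf i hi) v,
    ← sum_sub_distrib]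
  calc ‖∑ i ∈ s, (gradient (f i) u - gradient (f i) v)‖
      ≤ ∑ i ∈ s, ‖gradient (f i) u - gradient (f i) v‖ := norm_sum_le _ _
    _ ≤ ∑ _i ∈ s, L * ‖u - v‖ := sum_le_sum fun i hi => hlip i hi u v
    _ = #s * L * ‖u - v‖ := by rw [sum_const, nsmul_eq_mul, mul_assoc]

end GradientSum

theorem norm_le_norm_apply_zero_add {E F : Type*} [SeminormedAddCommGroup E]
    [SeminormedAddCommGroup F] {g : E → F} {L : ℝ} (hlip : ∀ u v, ‖g u - g v‖ ≤ L * ‖u - v‖)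
    (u : E) : ‖g u‖ ≤ ‖g 0‖ + L * ‖u‖ := by
  simpa [sub_zero, add_comm] using (norm_le_norm_add_norm_sub' (g u) (g 0)).trans
    (add_le_add_right (hlip u 0) _)

section Descent

variable {E : Type*} [NormedAddCommGroup E] [InnerProductSpace ℝ E] [CompleteSpace E]
  {F : E → ℝ} {Λ : ℝ}

theorem le_add_inner_gradient_add_mul_norm_sq (hF : Differentiable ℝ F) (hΛ : 0 ≤ Λ)
    (hlip : ∀ u v, ‖gradient F u - gradient F v‖ ≤ Λ * ‖u - v‖) (x v : E) :
    F (x + v) ≤ F x + inner ℝ (gradient F x) v + Λ * ‖v‖ ^ 2 := by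
  have hderiv (t : ℝ) :
      HasDerivAt (fun t : ℝ => F (x + t • v)) (inner ℝ (gradient F (x + t • v)) v) t := by
    have hline : HasDerivAt (fun t : ℝ => x + t • v) v t := by
      simpa using ((hasDerivAt_id t).smul_const v).const_add x
    exact (hF _).hasGradientAt.hasFDerivAt.comp_hasDerivAt t hline
  obtain ⟨c, ⟨hc0, hc1⟩, hslope⟩ := exists_hasDerivAt_eq_slope _ _ zero_lt_one
    (fun t _ => (hderiv t).continuousAt.continuousWithinAt) (fun t _ => hderiv t)
  simp only [one_smul, zero_smul, add_zero, sub_zero, div_one] at hslope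
  have hgrad : ‖gradient F (x + c • v) - gradient F x‖ ≤ Λ * ‖v‖ := by
    calc ‖gradient F (x + c • v) - gradient F x‖ ≤ Λ * (c * ‖v‖) := by
          simpa [norm_smul, abs_of_pos hc0] using hlip (x + c • v) x
      _ ≤ Λ * ‖v‖ := by gcongr; nlinarith [norm_nonneg v]
  have hinner : inner ℝ (gradient F (x + c • v) - gradient F x) v ≤ Λ * ‖v‖ ^ 2 := by
    calc inner ℝ (gradient F (x + c • v) - gradient F x) v
        ≤ ‖gradient F (x + c • v) - gradient F x‖ * ‖v‖ := real_inner_le_norm _ _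
      _ ≤ Λ * ‖v‖ * ‖v‖ := by gcongr
      _ = Λ * ‖v‖ ^ 2 := by ring
  rw [inner_sub_left] at hinner
  linarith

theorem one_sub_mul_norm_sq_lt_of_armijo_fails (hF : Differentiable ℝ F) (hΛ : 0 ≤ Λ)
    (hlip : ∀ u v, ‖gradient F u - gradient F v‖ ≤ Λ * ‖u - v‖) {w d : E} {γ t : ℝ}
    (ht : 0 < t) (hfail : F (w + t • d) > F w - γ * t * ‖d‖ ^ 2) :
    (1 - γ) * ‖d‖ ^ 2 < ‖d + gradient F w‖ * ‖d‖ + Λ * t * ‖d‖ ^ 2 := by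
  have hdescent := le_add_inner_gradient_add_mul_norm_sq hF hΛ hlip w (t • d)
  rw [inner_smul_right, norm_smul, Real.norm_eq_abs, abs_of_pos ht] at hdescent
  have hinner : inner ℝ (gradient F w) d ≤ ‖d + gradient F w‖ * ‖d‖ - ‖d‖ ^ 2 := by
    have := real_inner_le_norm (d + gradient F w) d
    rw [inner_add_left, real_inner_self_eq_norm_sq] at this
    linarith
  have : t * ((1 - γ) * ‖d‖ ^ 2) < t * (‖d + gradient F w‖ * ‖d‖ + Λ * t * ‖d‖ ^ 2) := by
    nlinarith
  exact lt_of_mul_lt_mul_left this ht.le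

end Descent

section IncrementalEpoch

variable {E : Type*} [NormedAddCommGroup E] [NormedSpace ℝ E] {g : ℕ → E → E} {x : ℕ → E}
  {m : ℕ} {ζ L G : ℝ}

theorem norm_sub_le_of_incremental_steps (hζ : 0 ≤ ζ) (hζ1 : ζ ≤ 1) (hL : 0 ≤ L)
    (hlip : ∀ i < m, ∀ u v, ‖g i u - g i v‖ ≤ L * ‖u - v‖) (hG : ∀ i < m, ‖g i (x 0)‖ ≤ G)
    (hstep : ∀ i < m, x (i + 1) = x i - ζ • g i (x i)) {i : ℕ} (hi : i ≤ m) :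
    ‖x i - x 0‖ ≤ ζ * (i * G * (1 + L) ^ i) := by
  induction i with
  | zero => simp
  | succ i ih =>
    have hi' : i < m := hi
    have hD := ih hi'.le
    have hG0 : 0 ≤ G := (norm_nonneg _).trans (hG i hi')
    have hgx : ‖g i (x i)‖ ≤ G + L * ‖x i - x 0‖ := by
      have := norm_le_norm_add_norm_sub' (g i (x i)) (g i (x 0))
      linarith [hlip i hi' (x i) (x 0), hG i hi']
    have hpow : 1 ≤ (1 + L) ^ (i + 1) := one_le_pow₀ (by linarith)
    calc ‖x (i + 1) - x 0‖ = ‖(x i - x 0) - ζ • g i (x i)‖ := by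
          rw [hstep i hi', sub_right_comm]
      _ ≤ ‖x i - x 0‖ + ζ * (G + L * ‖x i - x 0‖) := by
          grw [norm_sub_le, norm_smul, Real.norm_of_nonneg hζ, hgx]
      _ ≤ (1 + L) * ‖x i - x 0‖ + ζ * G := by
          nlinarith [mul_le_mul_of_nonneg_right hζ1 (mul_nonneg hL (norm_nonneg (x i - x 0)))]
      _ ≤ (1 + L) * (ζ * (i * G * (1 + L) ^ i)) + ζ * G := by gcongr
      _ ≤ ζ * ((i + 1 : ℕ) * G * (1 + L) ^ (i + 1)) := by
          push_cast
          rw [pow_succ] at hpow ⊢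
          nlinarith [mul_nonneg (mul_nonneg hζ hG0) (sub_nonneg.2 hpow)]

theorem norm_sum_sub_sum_le_of_incremental_steps (hζ : 0 ≤ ζ) (hζ1 : ζ ≤ 1) (hL : 0 ≤ L)
    (hlip : ∀ i < m, ∀ u v, ‖g i u - g i v‖ ≤ L * ‖u - v‖) (hG : ∀ i < m, ‖g i (x 0)‖ ≤ G)
    (hstep : ∀ i < m, x (i + 1) = x i - ζ • g i (x i)) :
    ‖∑ i ∈ range m, g i (x 0) - ∑ i ∈ range m, g i (x i)‖ ≤
      ζ * (m * L * (m * G * (1 + L) ^ m)) := by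
  rw [← sum_sub_distrib]
  calc ‖∑ i ∈ range m, (g i (x 0) - g i (x i))‖
      ≤ ∑ i ∈ range m, ‖g i (x 0) - g i (x i)‖ := norm_sum_le _ _
    _ ≤ ∑ _i ∈ range m, L * (ζ * (m * G * (1 + L) ^ m)) := by
        refine sum_le_sum fun i hi => ?_
        have hi' := mem_range.mp hi
        have hG0 : 0 ≤ G := (norm_nonneg _).trans (hG i hi')
        calc ‖g i (x 0) - g i (x i)‖ ≤ L * ‖x i - x 0‖ := by
              rw [norm_sub_rev]; exact hlip i hi' _ _
          _ ≤ L * (ζ * (i * G * (1 + L) ^ i)) := by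
              gcongr; exact norm_sub_le_of_incremental_steps hζ hζ1 hL hlip hG hstep hi'.le
          _ ≤ L * (ζ * (m * G * (1 + L) ^ m)) := by
              have him : (i : ℝ) ≤ m := by exact_mod_cast hi'.le
              have hpow : (1 + L) ^ i ≤ (1 + L) ^ m := pow_le_pow_right₀ (by linarith) hi'.le
              gcongr
    _ = ζ * (m * L * (m * G * (1 + L) ^ m)) := by rw [sum_const, card_range, nsmul_eq_mul]; ring

end IncrementalEpoch

theorem norm_neg_sum_gradient_add_gradient_sum_le {E : Type*} [NormedAddCommGroup E]
    [InnerProductSpace ℝ E] [CompleteSpace E] {ι : Type*} [Fintype ι] {f : ι → E → ℝ} {L : ℝ}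
    {m : ℕ} (hf : ∀ p, Differentiable ℝ (f p)) (hL : 0 ≤ L)
    (hlip : ∀ p u v, ‖gradient (f p) u - gradient (f p) v‖ ≤ L * ‖u - v‖)
    {σ : ℕ → ι} (hσ : Function.Bijective fun i : Fin m => σ i) {x : ℕ → E} {ζ G : ℝ}
    (hζ : 0 ≤ ζ) (hζ1 : ζ ≤ 1) (hG : ∀ p, ‖gradient (f p) (x 0)‖ ≤ G)
    (hstep : ∀ i < m, x (i + 1) = x i - ζ • gradient (f (σ i)) (x i)) :
    ‖-∑ i ∈ range m, gradient (f (σ i)) (x i) + gradient (fun y => ∑ p, f p y) (x 0)‖ ≤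
      ζ * (m * L * (m * G * (1 + L) ^ m)) := by
  have hreindex : gradient (fun y => ∑ p, f p y) (x 0) =
      ∑ i ∈ range m, gradient (f (σ i)) (x 0) := by
    rw [gradient_fun_sum fun p _ => (hf p).differentiableAt, ← hσ.sum_comp,
      Fin.sum_univ_eq_sum_range (fun i => gradient (f (σ i)) (x 0))]
  rw [hreindex, neg_add_eq_sub]
  exact norm_sum_sub_sum_le_of_incremental_steps hζ hζ1 hL (fun i _ => hlip (σ i))
    (fun i _ => hG (σ i)) hstep

theorem tendsto_neg_sum_gradient_add_gradient_sum {E : Type*} [NormedAddCommGroup E]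
    [InnerProductSpace ℝ E] [CompleteSpace E] {ι : Type*} [Fintype ι] {f : ι → E → ℝ} {L : ℝ}
    {m : ℕ} (hf : ∀ p, Differentiable ℝ (f p)) (hL : 0 ≤ L)
    (hlip : ∀ p u v, ‖gradient (f p) u - gradient (f p) v‖ ≤ L * ‖u - v‖)
    {w : ℕ → E} (hw : ∃ C, ∀ k, ‖w k‖ ≤ C) {ζ : ℕ → ℝ} (hζ : ∀ k, 0 ≤ ζ k)
    (hζ0 : Tendsto ζ atTop (𝓝 0)) {σ : ℕ → ℕ → ι}
    (hσ : ∀ k, Function.Bijective fun i : Fin m => σ k i) {x : ℕ → ℕ → E}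
    (hx0 : ∀ k, x k 0 = w k)
    (hstep : ∀ k, ∀ i < m, x k (i + 1) = x k i - ζ k • gradient (f (σ k i)) (x k i)) :
    Tendsto (fun k => -∑ i ∈ range m, gradient (f (σ k i)) (x k i) +
      gradient (fun y => ∑ p, f p y) (w k)) atTop (𝓝 0) := by
  obtain ⟨C, hC⟩ := hw
  set G := ∑ p, ‖gradient (f p) 0‖ + L * C
  have hG (k : ℕ) (p : ι) : ‖gradient (f p) (x k 0)‖ ≤ G := by
    rw [hx0]
    calc ‖gradient (f p) (w k)‖ ≤ ‖gradient (f p) 0‖ + L * ‖w k‖ :=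
          norm_le_norm_apply_zero_add (hlip p) _
      _ ≤ G := add_le_add (single_le_sum (f := fun p => ‖gradient (f p) 0‖)
          (fun _ _ => norm_nonneg _) (mem_univ p)) (mul_le_mul_of_nonneg_left (hC k) hL)
  refine squeeze_zero_norm' ?_ (by simpa using hζ0.mul_const (m * L * (m * G * (1 + L) ^ m)))
  filter_upwards [hζ0.eventually (eventually_le_nhds zero_lt_one)] with k hk
  simpa only [hx0] using
    norm_neg_sum_gradient_add_gradient_sum_le hf hL hlip (hσ k) (hζ k) hk (hG k) (hstep k)

/-- Conditions (i)–(iii) for reducing the inner stepsize `ζ` of the monotone CMA; (ii) and (iii)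
are failed Armijo tests at the steps `ζ` and `α / δ`. -/
def CMAStepsizeReduction {E : Type*} [SeminormedAddCommGroup E] [NormedSpace ℝ E]
    (F : E → ℝ) (γ δ τ ζ : ℝ) (w d : E) : Prop :=
  ‖d‖ ≤ τ * ζ ∨ F (w + ζ • d) > F w - γ * ζ * ‖d‖ ^ 2 ∨
    ∃ α : ℝ, 0 < α ∧ α * ‖d‖ ^ 2 ≤ τ * ζ ∧ F (w + (α / δ) • d) > F w - γ * (α / δ) * ‖d‖ ^ 2

section CMA

variable {E : Type*} [NormedAddCommGroup E] [InnerProductSpace ℝ E] [CompleteSpace E]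
  {F : E → ℝ} {Λ γ δ τ : ℝ}

theorem CMAStepsizeReduction.one_sub_mul_norm_sq_le {ζ M : ℝ} {w d : E}
    (h : CMAStepsizeReduction F γ δ τ ζ w d) (hF : Differentiable ℝ F) (hΛ : 0 ≤ Λ)
    (hlip : ∀ u v, ‖gradient F u - gradient F v‖ ≤ Λ * ‖u - v‖) (hγ : 0 ≤ γ) (hδ : 0 < δ)
    (hτ : 0 ≤ τ) (hζ : 0 < ζ) (hdM : ‖d‖ ≤ M) :
    (1 - γ) * ‖d‖ ^ 2 ≤ (τ * M + Λ * M ^ 2 + Λ * τ / δ) * ζ + M * ‖d + gradient F w‖ := by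
  have hd2 : ‖d‖ ^ 2 ≤ M ^ 2 := pow_le_pow_left₀ (norm_nonneg d) hdM 2
  have hM : 0 ≤ M := (norm_nonneg d).trans hdM
  have hτM : 0 ≤ τ * M * ζ := by positivity
  have hΛM : 0 ≤ Λ * M ^ 2 * ζ := by positivity
  have hΛτ : 0 ≤ Λ * τ / δ * ζ := by positivity
  have he : ‖d + gradient F w‖ * ‖d‖ ≤ M * ‖d + gradient F w‖ := by
    rw [mul_comm]; gcongr
  rcases h with hsmall | hfail | ⟨α, hα, hατ, hfail⟩
  · have : ‖d‖ ^ 2 ≤ τ * M * ζ := by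
      rw [sq]; nlinarith [norm_nonneg d, norm_nonneg (d + gradient F w)]
    nlinarith [mul_nonneg hM (norm_nonneg (d + gradient F w)), mul_nonneg hγ (sq_nonneg ‖d‖)]
  · have := one_sub_mul_norm_sq_lt_of_armijo_fails hF hΛ hlip hζ hfail
    nlinarith [mul_le_mul_of_nonneg_left hd2 (mul_nonneg hΛ hζ.le)]
  · have := one_sub_mul_norm_sq_lt_of_armijo_fails hF hΛ hlip (div_pos hα hδ) hfail
    have hstep : Λ * (α / δ) * ‖d‖ ^ 2 ≤ Λ * τ / δ * ζ :=
      calc Λ * (α / δ) * ‖d‖ ^ 2 = Λ / δ * (α * ‖d‖ ^ 2) := by ring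
        _ ≤ Λ / δ * (τ * ζ) := by gcongr
        _ = Λ * τ / δ * ζ := by ring
    nlinarith

theorem tendsto_gradient_of_cmaStepsizeReduction {w d : ℕ → E} {ζ : ℕ → ℝ} {K : Set ℕ}
    (hF : Differentiable ℝ F) (hΛ : 0 ≤ Λ)
    (hlip : ∀ u v, ‖gradient F u - gradient F v‖ ≤ Λ * ‖u - v‖) (hγ0 : 0 ≤ γ) (hγ1 : γ < 1)
    (hδ : 0 < δ) (hτ : 0 ≤ τ) (hw : ∃ C, ∀ k, ‖w k‖ ≤ C) (hζ : ∀ k, 0 < ζ k)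
    (hζ0 : Tendsto ζ atTop (𝓝 0)) (he : Tendsto (fun k => d k + gradient F (w k)) atTop (𝓝 0))
    (hK : ∀ k ∈ K, CMAStepsizeReduction F γ δ τ (ζ k) (w k) (d k)) :
    Tendsto (fun k => gradient F (w k)) (atTop ⊓ 𝓟 K) (𝓝 0) := by
  obtain ⟨C, hC⟩ := hw
  set M := 1 + (‖gradient F 0‖ + Λ * C)
  have hdM : ∀ᶠ k in atTop, ‖d k‖ ≤ M := by
    filter_upwards [he.norm.eventually (eventually_le_nhds (by simp : ‖(0 : E)‖ < 1))]
      with k hk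
    have hg : ‖gradient F (w k)‖ ≤ ‖gradient F 0‖ + Λ * C :=
      (norm_le_norm_apply_zero_add hlip (w k)).trans (by gcongr; exact hC k)
    calc ‖d k‖ = ‖(d k + gradient F (w k)) - gradient F (w k)‖ := by rw [add_sub_cancel_right]
      _ ≤ ‖d k + gradient F (w k)‖ + ‖gradient F (w k)‖ := norm_sub_le _ _
      _ ≤ M := add_le_add hk hg
  set A := τ * M + Λ * M ^ 2 + Λ * τ / δ
  have hr : Tendsto (fun k => (A * ζ k + M * ‖d k + gradient F (w k)‖) / (1 - γ))
      atTop (𝓝 0) := by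
    simpa using ((hζ0.const_mul A).add (he.norm.const_mul M)).div_const (1 - γ)
  have hd : Tendsto d (atTop ⊓ 𝓟 K) (𝓝 0) := by
    refine squeeze_zero_norm' ?_ (by simpa using hr.sqrt.mono_left inf_le_left)
    filter_upwards [mem_inf_of_right (mem_principal_self K), hdM.filter_mono inf_le_left]
      with k hk hkM
    refine Real.le_sqrt_of_sq_le ((le_div_iff₀ (by linarith)).2 ?_)
    linarith [(hK k hk).one_sub_mul_norm_sq_le hF hΛ hlip hγ0 hδ hτ (hζ k) hkM]
  simpa using (he.mono_left inf_le_left).sub hd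

end CMA

theorem exists_subseq_tendsto_of_tendsto_comp {X Y : Type*} [PseudoMetricSpace X]
    [ProperSpace X] [TopologicalSpace Y] [T2Space Y] {g : X → Y} (hg : Continuous g)
    {w : ℕ → X} (hw : Bornology.IsBounded (Set.range w)) {K : Set ℕ} (hK : K.Infinite) {y : Y}
    (hgw : Tendsto (g ∘ w) (atTop ⊓ 𝓟 K) (𝓝 y)) :
    ∃ x, (∃ φ : ℕ → ℕ, StrictMono φ ∧ Tendsto (w ∘ φ) atTop (𝓝 x)) ∧ g x = y := by
  have : NeBot (atTop ⊓ 𝓟 K) :=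
    frequently_mem_iff_neBot.mp (Nat.frequently_atTop_iff_infinite.mpr hK)
  obtain ⟨x, -, hx⟩ := hw.isCompact_closure.exists_mapClusterPt (f := atTop ⊓ 𝓟 K)
    (tendsto_principal.2 (Eventually.of_forall fun k => subset_closure (Set.mem_range_self k)))
  refine ⟨x, (hx.mono inf_le_left).tendsto_subseq, ?_⟩
  exact eq_of_nhds_neBot ((hx.continuousAt_comp hg.continuousAt).neBot.mono
    (inf_le_inf_left _ hgw))

/-- convergence of the monotone CMA.
Under Lipschitz continuity of the component gradients, if `{w^k}` is bounded,
`ζ^k → 0`, and along an infinite set `K` of iterations one of the three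
stepsize-reduction conditions (i)–(iii) of the monotone CMA holds, then `{w^k}`
admits a limit point `w̄` with `∇f(w̄) = 0`, where `f = ∑_{p=1}^P f_p`. -/
theorem stmt_10 {n P : ℕ}
    (f : Fin P → EuclideanSpace ℝ (Fin n) → ℝ)
    (hf : ∀ p, ContDiff ℝ 1 (f p))
    (L : ℝ) (hL : 0 < L)
    (hlip : ∀ p (u v : EuclideanSpace ℝ (Fin n)),
      ‖gradient (f p) u - gradient (f p) v‖ ≤ L * ‖u - v‖)
    (γ : ℝ) (hγ : γ ∈ Set.Ioo (0 : ℝ) 1)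
    (δ : ℝ) (hδ : δ ∈ Set.Ioo (0 : ℝ) 1)
    (τ : ℝ) (hτ : 0 < τ)
    (w : ℕ → EuclideanSpace ℝ (Fin n)) (hwbdd : ∃ C, ∀ k, ‖w k‖ ≤ C)
    (ζ : ℕ → ℝ) (hζpos : ∀ k, 0 < ζ k)
    (hζto0 : Tendsto ζ atTop (nhds 0))
    (h : ℕ → ℕ → Fin P)
    (hperm : ∀ k, Function.Bijective (fun i : Fin P => h k i.val))
    (wt : ℕ → ℕ → EuclideanSpace ℝ (Fin n))
    (hinit : ∀ k, wt k 0 = w k)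
    (hiter : ∀ k, ∀ i, i < P →
      wt k (i + 1) = wt k i - ζ k • gradient (f (h k i)) (wt k i))
    (d : ℕ → EuclideanSpace ℝ (Fin n))
    (hd : ∀ k, d k = -∑ i ∈ Finset.range P, gradient (f (h k i)) (wt k i))
    (F : EuclideanSpace ℝ (Fin n) → ℝ) (hF : F = fun x => ∑ p : Fin P, f p x)
    (K : Set ℕ) (hKinf : K.Infinite)
    (hK : ∀ k ∈ K,
      ‖d k‖ ≤ τ * ζ k ∨
      F (w k + ζ k • d k) > F (w k) - γ * ζ k * ‖d k‖ ^ 2 ∨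
      (∃ α : ℝ, 0 < α ∧ α * ‖d k‖ ^ 2 ≤ τ * ζ k ∧
        F (w k + (α / δ) • d k) > F (w k) - γ * (α / δ) * ‖d k‖ ^ 2)) :
    ∃ wbar : EuclideanSpace ℝ (Fin n),
      (∃ φ : ℕ → ℕ, StrictMono φ ∧
        Tendsto (fun k => w (φ k)) atTop (nhds wbar)) ∧
      gradient F wbar = 0 := by
  have hdiff : ∀ p, Differentiable ℝ (f p) := fun p => (hf p).differentiable one_ne_zero
  have hFdiff : Differentiable ℝ F := hF ▸ Differentiable.fun_sum fun p _ => hdiff p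
  have hFlip : ∀ u v, ‖gradient F u - gradient F v‖ ≤ P * L * ‖u - v‖ := by
    simpa [hF] using norm_gradient_fun_sum_sub_le (s := univ) (fun p _ => hdiff p)
      (fun p _ => hlip p)
  have he : Tendsto (fun k => d k + gradient F (w k)) atTop (𝓝 0) := by
    simpa only [hd, hF] using tendsto_neg_sum_gradient_add_gradient_sum hdiff hL.le hlip hwbdd
      (fun k => (hζpos k).le) hζto0 hperm hinit hiter
  have hgrad := tendsto_gradient_of_cmaStepsizeReduction hFdiff (by positivity) hFlip hγ.1.le
    hγ.2 hδ.1 hτ.le hwbdd hζpos hζto0 he hK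
  obtain ⟨C, hC⟩ := hwbdd
  exact exists_subseq_tendsto_of_tendsto_comp
    (LipschitzWith.of_dist_le' (by simpa only [dist_eq_norm] using hFlip)).continuous
    (isBounded_iff_forall_norm_le.2 ⟨C, Set.forall_mem_range.2 hC⟩) hKinf hgrad
end

section
/- Let f : ℝ^n → ℝ be bounded below and Lipschitz continuous with some constant L' > 0, let σ : [0,∞) → [0,∞) be a forcing function, and let M ∈ ℕ. Let {w^k} ⊂ ℝ^n and {R^k} ⊂ ℝ be sequences such that for every k: f(w^k) ≤ R^k ≤ max_{0 ≤ j ≤ min(k,M)} f(w^{k−j}) and f(w^{k+1}) ≤ R^k − σ(‖w^{k+1} − w^k‖). Then lim_{k→∞} ‖w^{k+1} − w^k‖ = 0. -/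
/-!
The reference values `V k = refMax (f ∘ w) M k` are nonincreasing and bounded below, so they
converge to some `a`. If `ℓ k ∈ [k - M, k]` is an index attaining `V k`, then `f (w (ℓ k)) → a`,
and the sufficient decrease `σ ‖w (ℓ k) - w (ℓ k - 1)‖ ≤ V (ℓ k - 1) - f (w (ℓ k))` together
with the forcing property and the Lipschitz bound propagates this limit back to
`f (w (ℓ k - j))` for every fixed `j`. Since every `k` is of the form `ℓ k' - j` with `j ≤ M`,
this gives `f (w k) → a`, and then `σ ‖w (k + 1) - w k‖ ≤ V k - f (w (k + 1)) → 0`.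
-/

open Filter Finset

/-- `refMax g M k = max_{0 ≤ j ≤ min(k,M)} g (k - j)`, the nonmonotone reference
maximum over the last `min(k,M)+1` values. -/
noncomputable def refMax (g : ℕ → ℝ) (M k : ℕ) : ℝ :=
  (Finset.range (min k M + 1)).sup' Finset.nonempty_range_add_one fun j => g (k - j)

open Topology

def IsForcing (σ : ℝ → ℝ) : Prop :=
  ∀ u : ℕ → ℝ, (∀ k, 0 ≤ u k) → Tendsto (fun k => σ (u k)) atTop (𝓝 0) → Tendsto u atTop (𝓝 0)

theorem tendsto_of_forall_tendsto_comp_sub {α : Type*} [PseudoMetricSpace α] {x : ℕ → α} {a : α}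
    {ℓ : ℕ → ℕ} {N : ℕ} (hℓ : ∀ k, k ≤ ℓ k ∧ ℓ k ≤ k + N)
    (h : ∀ j, Tendsto (fun k => x (ℓ k - j)) atTop (𝓝 a)) :
    Tendsto x atTop (𝓝 a) := by
  rw [tendsto_iff_dist_tendsto_zero]
  have hsum : Tendsto (fun k => ∑ j ∈ range (N + 1), dist (x (ℓ k - j)) a) atTop (𝓝 0) := by
    simpa using tendsto_finsetSum (range (N + 1)) fun j _ =>
      tendsto_iff_dist_tendsto_zero.1 (h j)
  refine squeeze_zero (fun _ => dist_nonneg) (fun k => ?_) hsum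
  have hk : ℓ k - (ℓ k - k) = k := by have := hℓ k; omega
  calc dist (x k) a = dist (x (ℓ k - (ℓ k - k))) a := by rw [hk]
    _ ≤ ∑ j ∈ range (N + 1), dist (x (ℓ k - j)) a :=
      single_le_sum (f := fun j => dist (x (ℓ k - j)) a) (fun _ _ => dist_nonneg)
        (mem_range.2 (by have := hℓ k; omega))

section refMax

variable {g : ℕ → ℝ} {M : ℕ}

theorem le_refMax (g : ℕ → ℝ) {k j : ℕ} (h : j ≤ min k M) : g (k - j) ≤ refMax g M k :=
  le_sup' (fun j => g (k - j)) (mem_range.2 (by omega))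

theorem exists_refMax_eq (g : ℕ → ℝ) (M k : ℕ) :
    ∃ j ≤ min k M, refMax g M k = g (k - j) := by
  obtain ⟨j, hj, hje⟩ := exists_mem_eq_sup' nonempty_range_add_one fun j => g (k - j)
  exact ⟨j, Nat.lt_succ_iff.1 (mem_range.1 hj), hje⟩

theorem refMax_succ_le {k : ℕ} (hg : g (k + 1) ≤ refMax g M k) :
    refMax g M (k + 1) ≤ refMax g M k := by
  refine sup'_le _ _ fun j hj => ?_
  rcases j with _ | j
  · exact hg
  · rw [show k + 1 - (j + 1) = k - j by omega]
    exact le_refMax g (by rw [mem_range] at hj; omega)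

theorem antitone_refMax (hg : ∀ k, g (k + 1) ≤ refMax g M k) : Antitone (refMax g M) :=
  antitone_nat_of_succ_le fun k => refMax_succ_le (hg k)

theorem bddBelow_range_refMax (hg : BddBelow (Set.range g)) :
    BddBelow (Set.range (refMax g M)) := by
  obtain ⟨b, hb⟩ := hg
  refine ⟨b, ?_⟩
  rintro _ ⟨k, rfl⟩
  exact (hb ⟨k, rfl⟩).trans (by simpa using le_refMax g (M := M) (k := k) (Nat.zero_le _))

end refMax

section SufficientDecrease

variable {g t : ℕ → ℝ} {σ : ℝ → ℝ} {M : ℕ} {L a : ℝ}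

theorem tendsto_comp_step_zero (ht : ∀ k, 0 ≤ t k) (hσ : ∀ s, 0 ≤ s → 0 ≤ σ s)
    (hforcing : IsForcing σ)
    (hdecr : ∀ k, g (k + 1) ≤ refMax g M k - σ (t k))
    (hV : Tendsto (refMax g M) atTop (𝓝 a)) {m : ℕ → ℕ} (hm : Tendsto m atTop atTop)
    (hgm : Tendsto (fun k => g (m k + 1)) atTop (𝓝 a)) :
    Tendsto (fun k => t (m k)) atTop (𝓝 0) := by
  have hgap : Tendsto (fun k => refMax g M (m k) - g (m k + 1)) atTop (𝓝 0) := by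
    simpa using (hV.comp hm).sub hgm
  refine hforcing _ (fun k => ht _) (squeeze_zero (fun k => hσ _ (ht _)) (fun k => ?_) hgap)
  linarith [hdecr (m k)]

theorem tendsto_comp_of_tendsto_comp_succ (ht : ∀ k, 0 ≤ t k) (hσ : ∀ s, 0 ≤ s → 0 ≤ σ s)
    (hforcing : IsForcing σ)
    (hdecr : ∀ k, g (k + 1) ≤ refMax g M k - σ (t k))
    (hstep : ∀ k, |g (k + 1) - g k| ≤ L * t k)
    (hV : Tendsto (refMax g M) atTop (𝓝 a)) {m : ℕ → ℕ} (hm : Tendsto m atTop atTop)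
    (hgm : Tendsto (fun k => g (m k + 1)) atTop (𝓝 a)) :
    Tendsto (fun k => g (m k)) atTop (𝓝 a) := by
  have htm := tendsto_comp_step_zero ht hσ hforcing hdecr hV hm hgm
  have hdiff : Tendsto (fun k => g (m k + 1) - g (m k)) atTop (𝓝 0) :=
    squeeze_zero_norm (fun k => hstep (m k)) (by simpa using htm.const_mul L)
  simpa using hgm.sub hdiff

theorem tendsto_of_tendsto_refMax (ht : ∀ k, 0 ≤ t k) (hσ : ∀ s, 0 ≤ s → 0 ≤ σ s)
    (hforcing : IsForcing σ)
    (hdecr : ∀ k, g (k + 1) ≤ refMax g M k - σ (t k))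
    (hstep : ∀ k, |g (k + 1) - g k| ≤ L * t k)
    (hV : Tendsto (refMax g M) atTop (𝓝 a)) :
    Tendsto g atTop (𝓝 a) := by
  choose i hi hVi using exists_refMax_eq g M
  set ℓ : ℕ → ℕ := fun k => k - i k
  have hℓ : Tendsto ℓ atTop atTop :=
    tendsto_atTop_mono (fun k => by have := hi k; simp only [ℓ]; omega) (tendsto_sub_atTop_nat M)
  have hback : ∀ j, Tendsto (fun k => g (ℓ k - j)) atTop (𝓝 a) := by
    intro j
    induction j with
    | zero => simpa [ℓ, ← hVi] using hV
    | succ j ih =>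
      refine tendsto_comp_of_tendsto_comp_succ ht hσ hforcing hdecr hstep hV
        ((tendsto_sub_atTop_nat (j + 1)).comp hℓ) (ih.congr' ?_)
      filter_upwards [hℓ.eventually_ge_atTop (j + 1)] with k hk
      rw [show ℓ k - (j + 1) + 1 = ℓ k - j by omega]
  exact tendsto_of_forall_tendsto_comp_sub (ℓ := fun k => ℓ (k + M)) (N := M)
    (fun k => by have := hi (k + M); simp only [ℓ]; omega)
    fun j => (hback j).comp (tendsto_add_atTop_nat M)

theorem tendsto_step_zero (ht : ∀ k, 0 ≤ t k) (hσ : ∀ s, 0 ≤ s → 0 ≤ σ s)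
    (hforcing : IsForcing σ)
    (hbdd : BddBelow (Set.range g))
    (hdecr : ∀ k, g (k + 1) ≤ refMax g M k - σ (t k))
    (hstep : ∀ k, |g (k + 1) - g k| ≤ L * t k) :
    Tendsto t atTop (𝓝 0) := by
  have hV := tendsto_atTop_ciInf
    (antitone_refMax fun k => by linarith [hdecr k, hσ _ (ht k)]) (bddBelow_range_refMax hbdd)
  have hg := tendsto_of_tendsto_refMax ht hσ hforcing hdecr hstep hV
  exact tendsto_comp_step_zero ht hσ hforcing hdecr hV tendsto_id
    (hg.comp (tendsto_add_atTop_nat 1))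

end SufficientDecrease

theorem stmt_13_general {n : ℕ}
    (f : EuclideanSpace ℝ (Fin n) → ℝ)
    (hbdd : BddBelow (Set.range f))
    (L' : ℝ)
    (hlip : ∀ u v : EuclideanSpace ℝ (Fin n), |f u - f v| ≤ L' * ‖u - v‖)
    (σ : ℝ → ℝ) (hσnonneg : ∀ t, 0 ≤ t → 0 ≤ σ t)
    (hσforcing : ∀ t : ℕ → ℝ, (∀ k, 0 ≤ t k) →
      Tendsto (fun k => σ (t k)) atTop (nhds 0) → Tendsto t atTop (nhds 0))
    (M : ℕ)
    (w : ℕ → EuclideanSpace ℝ (Fin n)) (R : ℕ → ℝ)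
    (hRhigh : ∀ k, R k ≤ refMax (fun k => f (w k)) M k)
    (hdecr : ∀ k, f (w (k + 1)) ≤ R k - σ ‖w (k + 1) - w k‖) :
    Tendsto (fun k => ‖w (k + 1) - w k‖) atTop (nhds 0) :=
  tendsto_step_zero (g := fun k => f (w k)) (M := M) (fun k => norm_nonneg _) hσnonneg hσforcing
    (hbdd.mono (Set.range_comp_subset_range w f)) (fun k => by linarith [hdecr k, hRhigh k])
    fun k => hlip _ _

/-- Lemma 1 from Grippo et al., part (v).
If `f` is bounded below and Lipschitz, `σ` is a forcing function and the
sequence satisfies `f(w^k) ≤ R^k ≤ max_{0≤j≤min(k,M)} f(w^{k-j})` and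
`f(w^{k+1}) ≤ R^k - σ(‖w^{k+1} - w^k‖)`, then `‖w^{k+1} - w^k‖ → 0`. -/
theorem stmt_13 {n : ℕ}
    (f : EuclideanSpace ℝ (Fin n) → ℝ)
    (hbdd : BddBelow (Set.range f))
    (L' : ℝ) (hL' : 0 < L')
    (hlip : ∀ u v : EuclideanSpace ℝ (Fin n), |f u - f v| ≤ L' * ‖u - v‖)
    (σ : ℝ → ℝ) (hσnonneg : ∀ t, 0 ≤ t → 0 ≤ σ t)
    (hσforcing : ∀ t : ℕ → ℝ, (∀ k, 0 ≤ t k) →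
      Tendsto (fun k => σ (t k)) atTop (nhds 0) → Tendsto t atTop (nhds 0))
    (M : ℕ)
    (w : ℕ → EuclideanSpace ℝ (Fin n)) (R : ℕ → ℝ)
    (hRlow : ∀ k, f (w k) ≤ R k)
    (hRhigh : ∀ k, R k ≤ refMax (fun k => f (w k)) M k)
    (hdecr : ∀ k, f (w (k + 1)) ≤ R k - σ ‖w (k + 1) - w k‖) :
    Tendsto (fun k => ‖w (k + 1) - w k‖) atTop (nhds 0) :=
  stmt_13_general f hbdd L' hlip σ hσnonneg hσforcing M w R hRhigh hdecr
end
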